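/- Let A be a complex Banach algebra with unit, q a positive integer, and τ : A × A × A → ℂ a continuous trilinear form satisfying the cyclic 2-cocycle conditions: τ(a¹,a²,a⁰) = τ(a⁰,a¹,a²) and τ(a⁰a¹,a²,a³) − τ(a⁰,a¹a²,a³) + τ(a⁰,a¹,a²a³) − τ(a³a⁰,a¹,a²) = 0 for all aⁱ ∈ A. Extend τ to q×q matrices over A by τ_q(a,b,c) = ∑_{i,j,k} τ(a_{ij}, b_{jk}, c_{ki}). If E : ℝ → M_q(A) is a differentiable map such that E(t)² = E(t) for every t ∈ ℝ, then the function t ↦ τ_q(E(t), E(t), E(t)) is constant. -/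

import Mathlib

open Finset
set_option linter.unusedSectionVars false
set_option maxHeartbeats 1000000

section aux
variable {A : Type} [NormedRing A] [NormedAlgebra ℂ A]

lemma upd0 (a b c x : A) : Function.update ![a,b,c] (0 : Fin 3) x = ![x,b,c] := by
  ext i; fin_cases i <;> simp [Function.update]
lemma upd1 (a b c x : A) : Function.update ![a,b,c] (1 : Fin 3) x = ![a,x,c] := by
  ext i; fin_cases i <;> simp [Function.update]
lemma upd2 (a b c x : A) : Function.update ![a,b,c] (2 : Fin 3) x = ![a,b,x] := by
  ext i; fin_cases i <;> simp [Function.update]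

variable (τ : ContinuousMultilinearMap ℂ (fun _ : Fin 3 => A) ℂ)

lemma tadd0 (x y b c : A) : τ ![x + y, b, c] = τ ![x,b,c] + τ ![y,b,c] := by
  have h := τ.map_update_add ![x,b,c] 0 x y
  rwa [upd0, upd0, upd0] at h
lemma tadd1 (a x y c : A) : τ ![a, x + y, c] = τ ![a,x,c] + τ ![a,y,c] := by
  have h := τ.map_update_add ![a,x,c] 1 x y
  rwa [upd1, upd1, upd1] at h
lemma tadd2 (a b x y : A) : τ ![a, b, x + y] = τ ![a,b,x] + τ ![a,b,y] := by
  have h := τ.map_update_add ![a,b,x] 2 x y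
  rwa [upd2, upd2, upd2] at h

lemma tzero0 (b c : A) : τ ![0, b, c] = 0 :=
  τ.map_coord_zero (m := ![0,b,c]) 0 (by simp)

lemma tsum0 {ι : Type} (s : Finset ι) (f : ι → A) (b c : A) :
    τ ![∑ j ∈ s, f j, b, c] = ∑ j ∈ s, τ ![f j, b, c] := by
  classical
  induction s using Finset.induction with
  | empty => simp [tzero0]
  | @insert a s h ih => rw [Finset.sum_insert h, tadd0, ih, Finset.sum_insert h]
lemma tsum1 {ι : Type} (s : Finset ι) (a : A) (f : ι → A) (c : A) :
    τ ![a, ∑ j ∈ s, f j, c] = ∑ j ∈ s, τ ![a, f j, c] := by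
  classical
  induction s using Finset.induction with
  | empty => simp [τ.map_coord_zero (m := ![a,0,c]) 1 (by simp)]
  | @insert x s h ih => rw [Finset.sum_insert h, tadd1, ih, Finset.sum_insert h]
lemma tsum2 {ι : Type} (s : Finset ι) (a b : A) (f : ι → A) :
    τ ![a, b, ∑ j ∈ s, f j] = ∑ j ∈ s, τ ![a, b, f j] := by
  classical
  induction s using Finset.induction with
  | empty => simp [τ.map_coord_zero (m := ![a,b,0]) 2 (by simp)]
  | @insert x s h ih => rw [Finset.sum_insert h, tadd2, ih, Finset.sum_insert h]

end aux

section matlayer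
variable {q : ℕ}

lemma rot3 {M : Type} [AddCommMonoid M] (g : Fin q → Fin q → Fin q → M) :
    ∑ a, ∑ b, ∑ c, g a b c = ∑ c, ∑ a, ∑ b, g a b c :=
  calc ∑ a, ∑ b, ∑ c, g a b c
      = ∑ a, ∑ c, ∑ b, g a b c := Finset.sum_congr rfl fun _ _ => Finset.sum_comm
    _ = ∑ c, ∑ a, ∑ b, g a b c := Finset.sum_comm

lemma rot3' {M : Type} [AddCommMonoid M] (g : Fin q → Fin q → Fin q → M) :
    ∑ a, ∑ b, ∑ c, g a b c = ∑ b, ∑ c, ∑ a, g a b c := by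
  rw [rot3 g, rot3 (fun c a b => g a b c)]

lemma swap14 {M : Type} [AddCommMonoid M] (g : Fin q → Fin q → Fin q → Fin q → M) :
    ∑ a, ∑ b, ∑ c, ∑ d, g a b c d = ∑ d, ∑ b, ∑ c, ∑ a, g a b c d := by
  calc ∑ a, ∑ b, ∑ c, ∑ d, g a b c d
      = ∑ a, ∑ d, ∑ b, ∑ c, g a b c d :=
        Finset.sum_congr rfl fun a _ => rot3 (fun b c d => g a b c d)
    _ = ∑ d, ∑ a, ∑ b, ∑ c, g a b c d := Finset.sum_comm
    _ = ∑ d, ∑ b, ∑ c, ∑ a, g a b c d :=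
        Finset.sum_congr rfl fun d _ => rot3' (fun a b c => g a b c d)

variable {A : Type} [NormedRing A] [NormedAlgebra ℂ A]

/-- matrix product -/
def mq (a b : Fin q → Fin q → A) : Fin q → Fin q → A := fun i k => ∑ j, a i j * b j k

/-- extension of `τ` to matrices -/
noncomputable def Tq (τ : ContinuousMultilinearMap ℂ (fun _ : Fin 3 => A) ℂ)
    (a b c : Fin q → Fin q → A) : ℂ :=
  ∑ i, ∑ j, ∑ k, τ ![a i j, b j k, c k i]

lemma mq_assoc (a b c : Fin q → Fin q → A) : mq (mq a b) c = mq a (mq b c) := by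
  funext i l
  simp only [mq, Finset.sum_mul, Finset.mul_sum, mul_assoc]
  exact Finset.sum_comm

lemma mq_add_right (a b c : Fin q → Fin q → A) :
    mq a (fun i k => b i k + c i k) = fun i k => mq a b i k + mq a c i k := by
  funext i k
  simp [mq, mul_add, Finset.sum_add_distrib]

variable (τ : ContinuousMultilinearMap ℂ (fun _ : Fin 3 => A) ℂ)

lemma Tq_cyc (hcyc : ∀ a b c : A, τ ![b, c, a] = τ ![a, b, c])
    (a b c : Fin q → Fin q → A) : Tq τ a b c = Tq τ c a b := by
  unfold Tq
  calc ∑ i, ∑ j, ∑ k, τ ![a i j, b j k, c k i]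
      = ∑ i, ∑ j, ∑ k, τ ![c k i, a i j, b j k] := by
        refine Finset.sum_congr rfl fun i _ => Finset.sum_congr rfl fun j _ =>
          Finset.sum_congr rfl fun k _ => ?_
        exact hcyc (c k i) (a i j) (b j k)
    _ = ∑ i, ∑ j, ∑ k, τ ![c i j, a j k, b k i] :=
        rot3 (fun i j k => τ ![c k i, a i j, b j k])

lemma Tq_zero0 (b c : Fin q → Fin q → A) :
    Tq τ (fun _ _ => (0 : A)) b c = 0 := by
  simp [Tq, tzero0]

lemma Tq_add0 (x y b c : Fin q → Fin q → A) :
    Tq τ (fun i k => x i k + y i k) b c = Tq τ x b c + Tq τ y b c := by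
  simp [Tq, tadd0, Finset.sum_add_distrib]

lemma Tq_cocycle
    (hcocycle : ∀ a₀ a₁ a₂ a₃ : A,
      τ ![a₀ * a₁, a₂, a₃] - τ ![a₀, a₁ * a₂, a₃] + τ ![a₀, a₁, a₂ * a₃]
        - τ ![a₃ * a₀, a₁, a₂] = 0)
    (a b c d : Fin q → Fin q → A) :
    Tq τ (mq a b) c d - Tq τ a (mq b c) d + Tq τ a b (mq c d)
      - Tq τ (mq d a) b c = 0 := by
  have h1 : Tq τ (mq a b) c d = ∑ i, ∑ j, ∑ k, ∑ l, τ ![a i j * b j k, c k l, d l i] := by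
    unfold Tq mq
    calc ∑ i, ∑ p, ∑ m, τ ![∑ j, a i j * b j p, c p m, d m i]
        = ∑ i, ∑ p, ∑ m, ∑ j, τ ![a i j * b j p, c p m, d m i] :=
          Finset.sum_congr rfl fun i _ => Finset.sum_congr rfl fun p _ =>
            Finset.sum_congr rfl fun m _ => tsum0 τ _ _ _ _
      _ = ∑ i, ∑ j, ∑ k, ∑ l, τ ![a i j * b j k, c k l, d l i] :=
          Finset.sum_congr rfl fun i _ =>
            rot3 (fun p m j => τ ![a i j * b j p, c p m, d m i])
  have h2 : Tq τ a (mq b c) d = ∑ i, ∑ j, ∑ k, ∑ l, τ ![a i j, b j k * c k l, d l i] := by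
    unfold Tq mq
    calc ∑ i, ∑ j, ∑ m, τ ![a i j, ∑ k, b j k * c k m, d m i]
        = ∑ i, ∑ j, ∑ m, ∑ k, τ ![a i j, b j k * c k m, d m i] :=
          Finset.sum_congr rfl fun i _ => Finset.sum_congr rfl fun j _ =>
            Finset.sum_congr rfl fun m _ => tsum1 τ _ _ _ _
      _ = ∑ i, ∑ j, ∑ k, ∑ l, τ ![a i j, b j k * c k l, d l i] :=
          Finset.sum_congr rfl fun i _ => Finset.sum_congr rfl fun j _ =>
            Finset.sum_comm
  have h3 : Tq τ a b (mq c d) = ∑ i, ∑ j, ∑ k, ∑ l, τ ![a i j, b j k, c k l * d l i] := by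
    unfold Tq mq
    exact Finset.sum_congr rfl fun i _ => Finset.sum_congr rfl fun j _ =>
      Finset.sum_congr rfl fun k _ => tsum2 τ _ _ _ _
  have h4 : Tq τ (mq d a) b c = ∑ i, ∑ j, ∑ k, ∑ l, τ ![d l i * a i j, b j k, c k l] := by
    unfold Tq mq
    calc ∑ p, ∑ j, ∑ k, τ ![∑ m, d p m * a m j, b j k, c k p]
        = ∑ p, ∑ j, ∑ k, ∑ m, τ ![d p m * a m j, b j k, c k p] :=
          Finset.sum_congr rfl fun p _ => Finset.sum_congr rfl fun j _ =>
            Finset.sum_congr rfl fun k _ => tsum0 τ _ _ _ _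
      _ = ∑ i, ∑ j, ∑ k, ∑ l, τ ![d l i * a i j, b j k, c k l] :=
          swap14 (fun p j k m => τ ![d p m * a m j, b j k, c k p])
  rw [h1, h2, h3, h4]
  simp only [← Finset.sum_sub_distrib, ← Finset.sum_add_distrib]
  refine Finset.sum_eq_zero fun i _ => Finset.sum_eq_zero fun j _ =>
    Finset.sum_eq_zero fun k _ => Finset.sum_eq_zero fun l _ => ?_
  exact hcocycle (a i j) (b j k) (c k l) (d l i)

end matlayer

section keylemma
variable {q : ℕ} {A : Type} [NormedRing A] [NormedAlgebra ℂ A]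
variable (τ : ContinuousMultilinearMap ℂ (fun _ : Fin 3 => A) ℂ)

lemma Tq_key
    (hcocycle : ∀ a₀ a₁ a₂ a₃ : A,
      τ ![a₀ * a₁, a₂, a₃] - τ ![a₀, a₁ * a₂, a₃] + τ ![a₀, a₁, a₂ * a₃]
        - τ ![a₃ * a₀, a₁, a₂] = 0)
    (F D : Fin q → Fin q → A)
    (hF : mq F F = F)
    (hD : D = fun i k => mq D F i k + mq F D i k) :
    Tq τ D F F = 0 := by
  have e2 : mq F (mq F D) = mq F D := by rw [← mq_assoc, hF]
  have hP : mq F (mq D F) = fun _ _ => (0 : A) := by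
    have h := congrArg (mq F) hD
    rw [mq_add_right, e2] at h
    funext i k
    exact right_eq_add.mp (congrFun (congrFun h i) k)
  have hEq : Tq τ (mq D F) F F = Tq τ (mq F D) F F := by
    have h := Tq_cocycle τ hcocycle D F F F
    rw [hF] at h
    linear_combination h
  have hzero : Tq τ (mq F D) F F = 0 := by
    have h := Tq_cocycle τ hcocycle (mq F D) F F F
    rw [hF] at h
    have e1 : mq (mq F D) F = fun _ _ => (0 : A) := by rw [mq_assoc]; exact hP
    rw [e1, e2, Tq_zero0] at h
    linear_combination -h
  calc Tq τ D F F = Tq τ (fun i k => mq D F i k + mq F D i k) F F :=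
        congrArg (fun X => Tq τ X F F) hD
    _ = Tq τ (mq D F) F F + Tq τ (mq F D) F F := Tq_add0 τ _ _ _ _
    _ = 0 := by rw [hEq, hzero, zero_add]

end keylemma



/-!
`A` is a complex unital Banach algebra.  Matrices in `M_q(A)` are encoded as functions
`Fin q → Fin q → A` (with the product normed-space structure, which induces the natural
norm topology of `M_q(A)`), matrix multiplication being `(a·b) i k = ∑ j, a i j * b j k`.
-/

/-- Let `A` be a complex unital Banach algebra, `q` a positive integer,
and `τ` a continuous trilinear form on `A` satisfying the cyclic 2-cocycle conditions.
Extend `τ` to `q × q` matrices by `τ_q(a,b,c) = ∑_{i,j,k} τ(a_{ij}, b_{jk}, c_{ki})`.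
If `E : ℝ → M_q(A)` is a differentiable map with `E(t)² = E(t)` for every `t`, then
`t ↦ τ_q(E(t), E(t), E(t))` is constant. -/
theorem trace_of_idempotent_homotopy_invariant
    {A : Type} [NormedRing A] [NormedAlgebra ℂ A] [CompleteSpace A]
    (q : ℕ) (hq : 0 < q)
    (τ : ContinuousMultilinearMap ℂ (fun _ : Fin 3 => A) ℂ)
    (hcyc : ∀ a b c : A, τ ![b, c, a] = τ ![a, b, c])
    (hcocycle : ∀ a₀ a₁ a₂ a₃ : A,
      τ ![a₀ * a₁, a₂, a₃] - τ ![a₀, a₁ * a₂, a₃] + τ ![a₀, a₁, a₂ * a₃]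
        - τ ![a₃ * a₀, a₁, a₂] = 0)
    (E : ℝ → Fin q → Fin q → A)
    (hE : Differentiable ℝ E)
    (hidem : ∀ (t : ℝ) (i k : Fin q), ∑ j, E t i j * E t j k = E t i k) :
    ∀ s t : ℝ,
      ∑ i, ∑ j, ∑ k, τ ![E s i j, E s j k, E s k i]
        = ∑ i, ∑ j, ∑ k, τ ![E t i j, E t j k, E t k i] := by
  classical
  set f : ℝ → ℂ := fun t => ∑ i, ∑ j, ∑ k, τ ![E t i j, E t j k, E t k i] with hfdef
  have hcomp : ∀ (t : ℝ) (i j : Fin q), HasDerivAt (fun s => E s i j) (deriv E t i j) t := by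
    intro t i j
    have h : HasDerivAt E (deriv E t) t := (hE t).hasDerivAt
    exact hasDerivAt_pi.mp (hasDerivAt_pi.mp h i) j
  have hf0 : ∀ t : ℝ, HasDerivAt f 0 t := by
    intro t
    have hterm : ∀ i j k : Fin q,
        HasDerivAt (fun s => τ ![E s i j, E s j k, E s k i])
          (τ ![deriv E t i j, E t j k, E t k i] + τ ![E t i j, deriv E t j k, E t k i]
            + τ ![E t i j, E t j k, deriv E t k i]) t := by
      intro i j k
      have hc : HasDerivAt (fun s => (![E s i j, E s j k, E s k i] : Fin 3 → A))
          ![deriv E t i j, deriv E t j k, deriv E t k i] t := by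
        rw [hasDerivAt_pi]
        intro m
        fin_cases m
        · simpa using hcomp t i j
        · simpa using hcomp t j k
        · simpa using hcomp t k i
      have h := ((ContinuousMultilinearMap.hasFDerivAt τ
        (![E t i j, E t j k, E t k i])).restrictScalars ℝ).comp_hasDerivAt t hc
      refine h.congr_deriv ?_
      rw [ContinuousLinearMap.coe_restrictScalars',
        ContinuousMultilinearMap.linearDeriv_apply, Fin.sum_univ_three]
      simp [upd0, upd1, upd2]
    have hFmat : mq (E t) (E t) = E t := by funext i k; exact hidem t i k
    have hDmat : deriv E t = fun i k => mq (deriv E t) (E t) i k + mq (E t) (deriv E t) i k := by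
      funext i k
      have h1 : HasDerivAt (fun s => ∑ j, E s i j * E s j k)
          (∑ j, (deriv E t i j * E t j k + E t i j * deriv E t j k)) t :=
        HasDerivAt.fun_sum fun j _ => (hcomp t i j).mul (hcomp t j k)
      have h2 : (fun s => ∑ j, E s i j * E s j k) = fun s => E s i k := by
        funext s; exact hidem s i k
      rw [h2] at h1
      have h3 := h1.unique (hcomp t i k)
      rw [← h3]
      simp [mq, Finset.sum_add_distrib]
    have hkey : Tq τ (deriv E t) (E t) (E t) = 0 := Tq_key τ hcocycle (E t) (deriv E t) hFmat hDmat
    have hsum : HasDerivAt f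
        (∑ i, ∑ j, ∑ k, (τ ![deriv E t i j, E t j k, E t k i]
          + τ ![E t i j, deriv E t j k, E t k i] + τ ![E t i j, E t j k, deriv E t k i])) t :=
      HasDerivAt.fun_sum fun i _ => HasDerivAt.fun_sum fun j _ => HasDerivAt.fun_sum fun k _ => hterm i j k
    have htot : (∑ i, ∑ j, ∑ k, (τ ![deriv E t i j, E t j k, E t k i]
          + τ ![E t i j, deriv E t j k, E t k i] + τ ![E t i j, E t j k, deriv E t k i])) = 0 := by
      simp only [Finset.sum_add_distrib]
      have c1 : (∑ i, ∑ j, ∑ k, τ ![deriv E t i j, E t j k, E t k i])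
          = Tq τ (deriv E t) (E t) (E t) := rfl
      have c2 : (∑ i, ∑ j, ∑ k, τ ![E t i j, deriv E t j k, E t k i])
          = Tq τ (E t) (deriv E t) (E t) := rfl
      have c3 : (∑ i, ∑ j, ∑ k, τ ![E t i j, E t j k, deriv E t k i])
          = Tq τ (E t) (E t) (deriv E t) := rfl
      rw [c1, c2, c3, Tq_cyc τ hcyc (E t) (deriv E t) (E t),
        Tq_cyc τ hcyc (E t) (E t) (deriv E t), hkey]
      ring
    exact htot ▸ hsum
  intro s t
  exact is_const_of_deriv_eq_zero (fun x => (hf0 x).differentiableAt) (fun x => (hf0 x).deriv) s t
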